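/- Let A be an n×n skew-symmetric complex matrix and β ∈ ℂⁿ with Aβ = 0. Then in the Grassmann algebra on θ₁,…,θₙ, the operator D = Σₜ βₜ∂ₜ annihilates exp(θᵀAθ): D exp(θᵀAθ) = 0. -/
import Mathlib


noncomputable section

/-- The Grassmann algebra over ℂ on `n` generators, modeled as the exterior algebra. -/
abbrev Gr (n : ℕ) := ExteriorAlgebra ℂ (Fin n → ℂ)

/-- The `i`-th Grassmann generator. -/
def θ (n : ℕ) (i : Fin n) : Gr n := ExteriorAlgebra.ι ℂ (Pi.single i 1)

/-- Left multiplication by the `i`-th generator, as an operator. -/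
def mulθ (n : ℕ) (i : Fin n) : Module.End ℂ (Gr n) := LinearMap.mulLeft ℂ (θ n i)

/-- The left Grassmann derivative `∂ᵢ`, modeled as interior multiplication (left contraction)
by the dual basis vector. -/
def pd (n : ℕ) (i : Fin n) : Module.End ℂ (Gr n) :=
  CliffordAlgebra.contractLeft (Q := (0 : QuadraticForm ℂ (Fin n → ℂ))) (LinearMap.proj i)

/-- The (finite) exponential series in the Grassmann algebra; for a nilpotent element with
zero constant term this coincides with the full Taylor series, since `x ^ (n+1) = 0`. -/
def gexp (n : ℕ) (x : Gr n) : Gr n := ∑ k ∈ Finset.range (n + 1), (k.factorial : ℂ)⁻¹ • x ^ k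

/-- The operator `dᵢ = ∂ᵢ + Σⱼ Fᵢⱼ θⱼ` associated to a matrix `F`. -/
def dF (n : ℕ) (F : Matrix (Fin n) (Fin n) ℂ) (i : Fin n) : Module.End ℂ (Gr n) :=
  pd n i + ∑ j, F i j • mulθ n j

end

lemma pd_one (n : ℕ) (t : Fin n) : pd n t 1 = 0 :=
  CliffordAlgebra.contractLeft_one _ _

lemma pd_theta_mul (n : ℕ) (t i : Fin n) (y : Gr n) :
    pd n t (θ n i * y) = ((Pi.single i 1 : Fin n → ℂ) t) • y - θ n i * pd n t y := by
  have := CliffordAlgebra.contractLeft_ι_mul (Q := (0 : QuadraticForm ℂ (Fin n → ℂ)))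
    (d := LinearMap.proj t) (Pi.single i 1) y
  simpa [pd, θ, ExteriorAlgebra.ι] using this

lemma pd_theta (n : ℕ) (t j : Fin n) :
    pd n t (θ n j) = ((Pi.single j 1 : Fin n → ℂ) t) • 1 := by
  have := pd_theta_mul n t j 1
  simpa [pd_one] using this

lemma pd_pair (n : ℕ) (t i j : Fin n) :
    pd n t (θ n i * θ n j) =
      ((Pi.single i 1 : Fin n → ℂ) t) • θ n j - ((Pi.single j 1 : Fin n → ℂ) t) • θ n i := by
  rw [pd_theta_mul, pd_theta]
  simp [mul_smul_comm]

lemma pd_pair_mul (n : ℕ) (t i j : Fin n) (y : Gr n) :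
    pd n t (θ n i * θ n j * y) = pd n t (θ n i * θ n j) * y + θ n i * θ n j * pd n t y := by
  rw [mul_assoc, pd_theta_mul, pd_theta_mul, pd_theta_mul, pd_theta]
  simp only [mul_sub, mul_smul_comm, smul_mul_assoc, sub_mul, mul_assoc, mul_one, mul_zero,
    smul_zero, sub_zero, smul_smul]
  abel

/-- For a skew-symmetric matrix `A` and `β` with `Aβ = 0`, the operator `D = Σₜ βₜ∂ₜ`
annihilates `exp(θᵀAθ)`. -/
theorem deriv_gaussian_eq_zero_of_mulVec_eq_zero (n : ℕ)
    (A : Matrix (Fin n) (Fin n) ℂ) (hA : A.transpose = -A) (β : Fin n → ℂ)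
    (hβ : A.mulVec β = 0) :
    (∑ t, β t • pd n t) (gexp n (∑ i, ∑ j, A i j • (θ n i * θ n j))) = 0 := by
  set S : Gr n := ∑ i, ∑ j, A i j • (θ n i * θ n j) with hS
  set D : Module.End ℂ (Gr n) := ∑ t, β t • pd n t with hD
  have h2 : ∀ i, (∑ j, A i j * β j) = 0 := by
    intro i
    have h := congrFun hβ i
    simpa [Matrix.mulVec, dotProduct] using h
  have h1 : ∀ j, (∑ i, A i j * β i) = 0 := by
    intro j
    have h := congrFun (congrArg (fun M => M.mulVec β) hA) j
    simpa [Matrix.mulVec, dotProduct, Matrix.transpose_apply, h2 j] using h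
  have hDθθ : ∀ i j, D (θ n i * θ n j) = β i • θ n j - β j • θ n i := by
    intro i j
    simp only [hD, LinearMap.sum_apply, LinearMap.smul_apply, pd_pair, Pi.single_apply,
      smul_sub, Finset.sum_sub_distrib, ite_smul, one_smul, zero_smul, smul_ite, smul_zero,
      Finset.sum_ite_eq, Finset.sum_ite_eq', Finset.mem_univ, if_true]
  have hDS : D S = 0 := by
    rw [hS, map_sum]
    simp only [map_sum, map_smul, hDθθ, smul_sub, smul_smul, Finset.sum_sub_distrib]
    rw [Finset.sum_comm (f := fun i j => (A i j * β i) • θ n j)]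
    simp only [← Finset.sum_smul, h1, h2, zero_smul, Finset.sum_const_zero, sub_zero]
  have leib : ∀ y : Gr n, D (S * y) = D S * y + S * D y := by
    intro y
    have key : ∀ t, pd n t (S * y) = pd n t S * y + S * pd n t y := by
      intro t
      simp only [hS, Finset.sum_mul, smul_mul_assoc, map_sum, map_smul, pd_pair_mul,
        smul_add, Finset.sum_add_distrib, Finset.mul_sum, mul_smul_comm]
    simp only [hD, LinearMap.sum_apply, LinearMap.smul_apply, key, smul_add,
      Finset.sum_add_distrib, Finset.sum_mul, smul_mul_assoc, Finset.mul_sum, mul_smul_comm]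
  have hpow : ∀ k : ℕ, D (S ^ k) = 0 := by
    intro k
    induction k with
    | zero =>
        simp only [pow_zero, hD, LinearMap.sum_apply, LinearMap.smul_apply, pd_one,
          smul_zero, Finset.sum_const_zero]
    | succ k ih =>
        rw [pow_succ']
        rw [leib, hDS, ih, zero_mul, mul_zero, add_zero]
  rw [gexp, map_sum]
  simp only [map_smul, hpow, smul_zero, Finset.sum_const_zero]
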